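/- Let Φ : M_d(ℂ) → M_d(ℂ) be a quantum channel, H a Hermitian d×d matrix, E a real number at least the smallest eigenvalue of H, and δ ∈ [0,2]. Let Γ(E,δ) be the set of quadruples (P,Q,R,S) of d×d complex matrices satisfying: Q ⪰ 0, tr(Q) = 1, tr(HQ) ≤ E; Q + (δ/2)(R − S) ⪰ 0; tr(H(Q + (δ/2)(R − S))) ≤ E; R ⪰ 0, tr(R) = 1; S ⪰ 0, tr(S) = 1; and 0 ⪯ P ⪯ I. Then the Dobrushin curve of Φ with respect to H and E satisfies F_E(δ) = δ · sup{tr(P Φ(R − S)) : (P,Q,R,S) ∈ Γ(E,δ)}. -/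

import Mathlib

open scoped ComplexOrder

/-- The old `Matrix.PosSemidef.sqrt` (removed from Mathlib), with its original definition. -/
noncomputable def posSemidefSqrtOld {d : ℕ} {A : Matrix (Fin d) (Fin d) ℂ} (hA : A.PosSemidef) :
    Matrix (Fin d) (Fin d) ℂ :=
  hA.1.eigenvectorUnitary.1 * Matrix.diagonal ((↑) ∘ (√·) ∘ hA.1.eigenvalues) *
    (star hA.1.eigenvectorUnitary : Matrix (Fin d) (Fin d) ℂ)

/-- The trace norm `‖A‖₁ = tr √(A†A)` of a complex matrix. -/
noncomputable def traceNorm {d : ℕ} (A : Matrix (Fin d) (Fin d) ℂ) : ℝ :=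
  (posSemidefSqrtOld (Matrix.posSemidef_conjTranspose_mul_self A)).trace.re

/-- A density matrix: positive semidefinite with unit trace. -/
def IsDensity {d : ℕ} (ρ : Matrix (Fin d) (Fin d) ℂ) : Prop :=
  ρ.PosSemidef ∧ ρ.trace = 1

/-- The map `Φ ⊗ id_n` acting on `M_d(ℂ) ⊗ M_n(ℂ)`. -/
def stackMap {d : ℕ} (Φ : Matrix (Fin d) (Fin d) ℂ →ₗ[ℂ] Matrix (Fin d) (Fin d) ℂ) (n : ℕ)
    (M : Matrix (Fin d × Fin n) (Fin d × Fin n) ℂ) : Matrix (Fin d × Fin n) (Fin d × Fin n) ℂ :=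
  Matrix.of fun ia jb => Φ (Matrix.of fun i j => M (i, ia.2) (j, jb.2)) ia.1 jb.1

/-- A quantum channel: a completely positive trace-preserving linear map. -/
def IsCPTP {d : ℕ} (Φ : Matrix (Fin d) (Fin d) ℂ →ₗ[ℂ] Matrix (Fin d) (Fin d) ℂ) : Prop :=
  (∀ A, (Φ A).trace = A.trace) ∧
    ∀ (n : ℕ) (M : Matrix (Fin d × Fin n) (Fin d × Fin n) ℂ),
      M.PosSemidef → (stackMap Φ n M).PosSemidef

/-- The Dobrushin coefficient `η(Φ)`. -/
noncomputable def dobrushinCoeff {d : ℕ}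
    (Φ : Matrix (Fin d) (Fin d) ℂ →ₗ[ℂ] Matrix (Fin d) (Fin d) ℂ) : ℝ :=
  sSup {r | ∃ ρ₀ ρ₁ : Matrix (Fin d) (Fin d) ℂ, IsDensity ρ₀ ∧ IsDensity ρ₁ ∧ ρ₀ ≠ ρ₁ ∧
    r = traceNorm (Φ ρ₀ - Φ ρ₁) / traceNorm (ρ₀ - ρ₁)}

/-- The Dobrushin curve `F_E(δ)` of a map `Φ` with respect to the Hamiltonian `H` and the
energy bound `E`: the supremum of `‖Φ(ρ₀) − Φ(ρ₁)‖₁` over pairs of energy-constrained states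
at trace distance at most `δ`. -/
noncomputable def dobrushinCurve {d : ℕ}
    (Φ : Matrix (Fin d) (Fin d) ℂ → Matrix (Fin d) (Fin d) ℂ)
    (H : Matrix (Fin d) (Fin d) ℂ) (E δ : ℝ) : ℝ :=
  sSup {r | ∃ ρ₀ ρ₁ : Matrix (Fin d) (Fin d) ℂ, IsDensity ρ₀ ∧ IsDensity ρ₁ ∧
    ((ρ₀ * H).trace).re ≤ E ∧ ((ρ₁ * H).trace).re ≤ E ∧
    traceNorm (ρ₀ - ρ₁) ≤ δ ∧ r = traceNorm (Φ ρ₀ - Φ ρ₁)}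

/-!
For a traceless Hermitian `A`, `‖A‖₁ = 2 tr A⁺ = 2 max {Re tr(P A) : 0 ⪯ P ⪯ 1}`, the maximum
being attained at the spectral projection onto the positive eigenspaces. Two states at trace
distance at most `δ` differ by exactly `(δ/2)(R − S)` for states `R, S`: the positive and negative
parts of their difference, rescaled by `2/δ` and padded with a state to unit trace. Writing
`ρ₀ = Q + (δ/2)(R − S)` and `ρ₁ = Q` therefore matches the pairs of the Dobrushin curve with the
quadruples of `Γ(E, δ)`, and `‖Φ ρ₀ − Φ ρ₁‖₁ = (δ/2) ‖Φ(R − S)‖₁ = δ · max_P Re tr(P Φ(R − S))`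
because `Φ(R − S)` is again traceless and Hermitian.
-/

open Matrix
open scoped MatrixOrder

namespace Matrix

variable {n : Type*} [Fintype n] [DecidableEq n]

theorem re_trace_mul_nonneg {P B : Matrix n n ℂ} (hP : 0 ≤ P) (hB : 0 ≤ B) :
    0 ≤ (P * B).trace.re := by
  have hconj : (CFC.sqrt B * P * CFC.sqrt B).PosSemidef := by
    simpa [(CFC.sqrt_nonneg B).posSemidef.1.eq] using
      hP.posSemidef.conjTranspose_mul_mul_same (CFC.sqrt B)
  rw [← CFC.sqrt_mul_sqrt_self B, ← Matrix.mul_assoc, trace_mul_cycle]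
  exact Complex.nonneg_iff.mp hconj.trace_nonneg |>.1

theorem re_trace_mul_le {P B : Matrix n n ℂ} (hP : P ≤ 1) (hB : 0 ≤ B) :
    (P * B).trace.re ≤ B.trace.re := by
  have := re_trace_mul_nonneg (sub_nonneg.mpr hP) hB
  rwa [Matrix.sub_mul, Matrix.one_mul, trace_sub, Complex.sub_re, sub_nonneg] at this

theorem re_trace_mul_le_re_trace_posPart {P A : Matrix n n ℂ} (hP₀ : 0 ≤ P) (hP₁ : P ≤ 1)
    (hA : A.IsHermitian) : (P * A).trace.re ≤ (A⁺).trace.re := by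
  have hA' : IsSelfAdjoint A := hA
  have hpos := re_trace_mul_le hP₁ (CFC.posPart_nonneg A)
  have hneg := re_trace_mul_nonneg hP₀ (CFC.negPart_nonneg A)
  calc (P * A).trace.re = (P * A⁺).trace.re - (P * A⁻).trace.re := by
        rw [← Complex.sub_re, ← trace_sub, ← Matrix.mul_sub, CFC.posPart_sub_negPart A]
    _ ≤ (A⁺).trace.re := by linarith

theorem exists_mul_eq_posPart {A : Matrix n n ℂ} (hA : A.IsHermitian) :
    ∃ P : Matrix n n ℂ, 0 ≤ P ∧ P ≤ 1 ∧ P * A = A⁺ := by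
  have hA' : IsSelfAdjoint A := hA
  let χ : ℝ → ℝ := fun x => if 0 < x then 1 else 0
  refine ⟨cfc χ A, cfc_nonneg fun x _ => by positivity, cfc_le_one _ _ fun x _ => by grind, ?_⟩
  nth_rw 2 [← cfc_id ℝ A]
  rw [← cfc_mul χ id A (A.finite_real_spectrum.continuousOn _), CFC.posPart_def, cfcₙ_eq_cfc]
  congr 1
  ext x
  simp only [χ, id, posPart]
  split_ifs with h
  · simp [h.le]
  · simp [not_lt.mp h]

end Matrix

theorem posSemidefSqrtOld_eq_sqrt {d : ℕ} {B : Matrix (Fin d) (Fin d) ℂ} (hB : B.PosSemidef) :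
    posSemidefSqrtOld hB = CFC.sqrt B := by
  rw [CFC.sqrt_eq_real_sqrt B hB.nonneg, cfcₙ_eq_cfc, hB.1.cfc_eq, IsHermitian.cfc,
    Unitary.conjStarAlgAut_apply]
  rfl

section traceNorm

variable {d : ℕ}

theorem traceNorm_eq_re_trace_abs (A : Matrix (Fin d) (Fin d) ℂ) :
    traceNorm A = (CFC.abs A).trace.re := by
  rw [traceNorm, posSemidefSqrtOld_eq_sqrt, CFC.abs, star_eq_conjTranspose]

theorem traceNorm_nonneg (A : Matrix (Fin d) (Fin d) ℂ) : 0 ≤ traceNorm A :=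
  traceNorm_eq_re_trace_abs A ▸ (Complex.nonneg_iff.mp (CFC.abs_nonneg A).posSemidef.trace_nonneg).1

theorem ofReal_traceNorm_eq_trace_abs (A : Matrix (Fin d) (Fin d) ℂ) :
    (traceNorm A : ℂ) = (CFC.abs A).trace := by
  have h := Complex.nonneg_iff.mp (CFC.abs_nonneg A).posSemidef.trace_nonneg
  rw [traceNorm_eq_re_trace_abs]
  exact Complex.ext rfl (by simp [h.2])

theorem eq_zero_of_traceNorm_eq_zero {A : Matrix (Fin d) (Fin d) ℂ} (h : traceNorm A = 0) :
    A = 0 := by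
  have habs : CFC.abs A = 0 := by
    rw [← (CFC.abs_nonneg A).posSemidef.trace_eq_zero_iff, ← ofReal_traceNorm_eq_trace_abs, h,
      Complex.ofReal_zero]
  rw [← conjTranspose_mul_self_eq_zero, ← star_eq_conjTranspose, ← CFC.abs_mul_abs, habs, zero_mul]

theorem traceNorm_smul_of_nonneg {c : ℝ} (hc : 0 ≤ c) (A : Matrix (Fin d) (Fin d) ℂ) :
    traceNorm ((c : ℂ) • A) = c * traceNorm A := by
  rw [traceNorm_eq_re_trace_abs, traceNorm_eq_re_trace_abs, CFC.abs_smul, trace_smul,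
    Complex.norm_of_nonneg hc, Complex.smul_re, smul_eq_mul]

variable {A : Matrix (Fin d) (Fin d) ℂ}

theorem ofReal_traceNorm_eq_two_mul_trace_posPart (hA : A.IsHermitian) (h₀ : A.trace = 0) :
    (traceNorm A : ℂ) = 2 * (A⁺).trace := by
  have hA' : IsSelfAdjoint A := hA
  have := congrArg trace (CFC.abs_add_self A)
  rwa [trace_add, h₀, add_zero, trace_smul, nsmul_eq_mul, Nat.cast_ofNat,
    ← ofReal_traceNorm_eq_trace_abs] at this

theorem trace_negPart_eq_trace_posPart (hA : A.IsHermitian) (h₀ : A.trace = 0) :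
    (A⁻).trace = (A⁺).trace := by
  have hA' : IsSelfAdjoint A := hA
  have := congrArg trace (CFC.posPart_sub_negPart A)
  rw [trace_sub, h₀, sub_eq_zero] at this
  exact this.symm

theorem traceNorm_eq_two_mul_re_trace_posPart (hA : A.IsHermitian) (h₀ : A.trace = 0) :
    traceNorm A = 2 * (A⁺).trace.re := by
  simpa using congrArg Complex.re (ofReal_traceNorm_eq_two_mul_trace_posPart hA h₀)

theorem two_mul_re_trace_mul_le_traceNorm (hA : A.IsHermitian) (h₀ : A.trace = 0)
    {P : Matrix (Fin d) (Fin d) ℂ} (hP₀ : 0 ≤ P) (hP₁ : P ≤ 1) :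
    2 * (P * A).trace.re ≤ traceNorm A := by
  rw [traceNorm_eq_two_mul_re_trace_posPart hA h₀]
  linarith [re_trace_mul_le_re_trace_posPart hP₀ hP₁ hA]

theorem exists_two_mul_re_trace_mul_eq_traceNorm (hA : A.IsHermitian) (h₀ : A.trace = 0) :
    ∃ P : Matrix (Fin d) (Fin d) ℂ, 0 ≤ P ∧ P ≤ 1 ∧ 2 * (P * A).trace.re = traceNorm A := by
  obtain ⟨P, hP₀, hP₁, hPA⟩ := exists_mul_eq_posPart hA
  exact ⟨P, hP₀, hP₁, by rw [hPA, traceNorm_eq_two_mul_re_trace_posPart hA h₀]⟩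

end traceNorm

namespace IsDensity

variable {d : ℕ} {ρ σ : Matrix (Fin d) (Fin d) ℂ}

theorem trace_sub_eq_zero (hρ : IsDensity ρ) (hσ : IsDensity σ) : (ρ - σ).trace = 0 := by
  rw [trace_sub, hρ.2, hσ.2, sub_self]

theorem traceNorm_sub_le_two (hρ : IsDensity ρ) (hσ : IsDensity σ) : traceNorm (ρ - σ) ≤ 2 := by
  obtain ⟨P, hP₀, hP₁, hP⟩ :=
    exists_two_mul_re_trace_mul_eq_traceNorm (hρ.1.1.sub hσ.1.1) (hρ.trace_sub_eq_zero hσ)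
  have hle := re_trace_mul_le hP₁ hρ.1.nonneg
  have hnonneg := re_trace_mul_nonneg hP₀ hσ.1.nonneg
  rw [hρ.2, Complex.one_re] at hle
  rw [← hP, Matrix.mul_sub, trace_sub, Complex.sub_re]
  linarith

theorem exists_sub_eq_smul_sub (hρ : IsDensity ρ) (hσ : IsDensity σ) {δ : ℝ}
    (hdist : traceNorm (ρ - σ) ≤ δ) :
    ∃ R S : Matrix (Fin d) (Fin d) ℂ, IsDensity R ∧ IsDensity S ∧
      ρ - σ = ((δ / 2 : ℝ) : ℂ) • (R - S) := by
  set A := ρ - σ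
  have hA : A.IsHermitian := hρ.1.1.sub hσ.1.1
  have hA₀ : A.trace = 0 := hρ.trace_sub_eq_zero hσ
  rcases (le_trans (traceNorm_nonneg A) hdist).eq_or_lt with hδ₀ | hδ₀
  · refine ⟨σ, σ, hσ, hσ, ?_⟩
    rw [sub_self, smul_zero]
    exact eq_zero_of_traceNorm_eq_zero (le_antisymm (hδ₀ ▸ hdist) (traceNorm_nonneg A))
  set t := traceNorm A
  have hκ : 0 ≤ 1 - t / δ := by rw [sub_nonneg, div_le_one hδ₀]; exact hdist
  have htrace_pos : A⁺.trace = ((t / 2 : ℝ) : ℂ) := by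
    push_cast
    rw [ofReal_traceNorm_eq_two_mul_trace_posPart hA hA₀]
    ring
  have hpad : ∀ B : Matrix (Fin d) (Fin d) ℂ, 0 ≤ B → B.trace = ((t / 2 : ℝ) : ℂ) →
      IsDensity ((2 / δ) • B + (1 - t / δ) • σ) := by
    intro B hB htr
    refine ⟨(hB.posSemidef.smul (by positivity)).add (hσ.1.smul hκ), ?_⟩
    rw [trace_add, trace_smul, trace_smul, htr, hσ.2, Complex.real_smul, Complex.real_smul]
    push_cast
    field_simp
    ring
  refine ⟨_, _, hpad _ (CFC.posPart_nonneg A) htrace_pos,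
    hpad _ (CFC.negPart_nonneg A) (trace_negPart_eq_trace_posPart hA hA₀ ▸ htrace_pos), ?_⟩
  have hA' : IsSelfAdjoint A := hA
  rw [add_sub_add_right_eq_sub, ← smul_sub, CFC.posPart_sub_negPart A,
    Complex.coe_smul, smul_smul, div_mul_div_cancel₀ two_ne_zero,
    div_self hδ₀.ne', one_smul]

theorem traceNorm_smul_sub_le (hρ : IsDensity ρ) (hσ : IsDensity σ) {δ : ℝ} (hδ : 0 ≤ δ) :
    traceNorm (((δ / 2 : ℝ) : ℂ) • (ρ - σ)) ≤ δ := by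
  rw [traceNorm_smul_of_nonneg (by positivity)]
  nlinarith [hρ.traceNorm_sub_le_two hσ]

end IsDensity

namespace IsCPTP

variable {d : ℕ} {Φ : Matrix (Fin d) (Fin d) ℂ →ₗ[ℂ] Matrix (Fin d) (Fin d) ℂ}

theorem posSemidef_map (hΦ : IsCPTP Φ) {A : Matrix (Fin d) (Fin d) ℂ} (hA : A.PosSemidef) :
    (Φ A).PosSemidef := by
  let e : Fin d × Fin 1 ≃ Fin d := Equiv.prodUnique _ _
  have h := hΦ.2 1 (A.submatrix e e) ((posSemidef_submatrix_equiv e).mpr hA)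
  have hstack : stackMap Φ 1 (A.submatrix e e) = (Φ A).submatrix e e := rfl
  rwa [hstack, posSemidef_submatrix_equiv] at h

theorem isHermitian_map (hΦ : IsCPTP Φ) {A : Matrix (Fin d) (Fin d) ℂ} (hA : A.IsHermitian) :
    (Φ A).IsHermitian := by
  have hA' : IsSelfAdjoint A := hA
  rw [← CFC.posPart_sub_negPart A, map_sub]
  exact (hΦ.posSemidef_map (CFC.posPart_nonneg A).posSemidef).1.sub
    (hΦ.posSemidef_map (CFC.negPart_nonneg A).posSemidef).1

variable {R S : Matrix (Fin d) (Fin d) ℂ}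

theorem isHermitian_map_sub (hΦ : IsCPTP Φ) (hR : IsDensity R) (hS : IsDensity S) :
    (Φ (R - S)).IsHermitian :=
  hΦ.isHermitian_map (hR.1.1.sub hS.1.1)

theorem trace_map_sub (hΦ : IsCPTP Φ) (hR : IsDensity R) (hS : IsDensity S) :
    (Φ (R - S)).trace = 0 :=
  (hΦ.1 _).trans (hR.trace_sub_eq_zero hS)

theorem exists_traceNorm_map_sub_eq (hΦ : IsCPTP Φ) {ρ₀ ρ₁ : Matrix (Fin d) (Fin d) ℂ}
    (h₀ : IsDensity ρ₀) (h₁ : IsDensity ρ₁) {δ : ℝ} (hdist : traceNorm (ρ₀ - ρ₁) ≤ δ) :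
    ∃ P R S : Matrix (Fin d) (Fin d) ℂ, 0 ≤ P ∧ P ≤ 1 ∧ IsDensity R ∧ IsDensity S ∧
      ρ₀ = ρ₁ + ((δ / 2 : ℝ) : ℂ) • (R - S) ∧
      traceNorm (Φ ρ₀ - Φ ρ₁) = δ * (P * Φ (R - S)).trace.re := by
  obtain ⟨R, S, hR, hS, hRS⟩ := h₀.exists_sub_eq_smul_sub h₁ hdist
  obtain ⟨P, hP₀, hP₁, hP⟩ := exists_two_mul_re_trace_mul_eq_traceNorm
    (hΦ.isHermitian_map_sub hR hS) (hΦ.trace_map_sub hR hS)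
  have hρ₀ : ρ₀ = ρ₁ + ((δ / 2 : ℝ) : ℂ) • (R - S) := by rw [← hRS, add_sub_cancel]
  refine ⟨P, R, S, hP₀, hP₁, hR, hS, hρ₀, ?_⟩
  have hδ : 0 ≤ δ / 2 := by linarith [le_trans (traceNorm_nonneg _) hdist]
  rw [hρ₀, map_add, map_smul, add_sub_cancel_left, traceNorm_smul_of_nonneg hδ, ← hP]
  ring

theorem mul_re_trace_mul_le_traceNorm_map_sub (hΦ : IsCPTP Φ) (hR : IsDensity R)
    (hS : IsDensity S) {P : Matrix (Fin d) (Fin d) ℂ} (hP₀ : 0 ≤ P) (hP₁ : P ≤ 1) {δ : ℝ}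
    (hδ : 0 ≤ δ) (Q : Matrix (Fin d) (Fin d) ℂ) :
    δ * (P * Φ (R - S)).trace.re ≤ traceNorm (Φ (Q + ((δ / 2 : ℝ) : ℂ) • (R - S)) - Φ Q) := by
  rw [map_add, map_smul, add_sub_cancel_left, traceNorm_smul_of_nonneg (by positivity)]
  nlinarith [two_mul_re_trace_mul_le_traceNorm (hΦ.isHermitian_map_sub hR hS)
    (hΦ.trace_map_sub hR hS) hP₀ hP₁]

end IsCPTP

theorem stmt_8_general (d : ℕ)
    (Φ : Matrix (Fin d) (Fin d) ℂ →ₗ[ℂ] Matrix (Fin d) (Fin d) ℂ) (hΦ : IsCPTP Φ)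
    (H : Matrix (Fin d) (Fin d) ℂ)
    (E : ℝ)
    (δ : ℝ) (hδ : δ ∈ Set.Icc (0 : ℝ) 2) :
    dobrushinCurve (⇑Φ) H E δ =
      δ * sSup {r | ∃ P Q R S : Matrix (Fin d) (Fin d) ℂ,
        Q.PosSemidef ∧ Q.trace = 1 ∧ ((H * Q).trace).re ≤ E ∧
        (Q + (((δ / 2 : ℝ) : ℂ)) • (R - S)).PosSemidef ∧
        ((H * (Q + (((δ / 2 : ℝ) : ℂ)) • (R - S))).trace).re ≤ E ∧
        R.PosSemidef ∧ R.trace = 1 ∧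
        S.PosSemidef ∧ S.trace = 1 ∧
        P.PosSemidef ∧ (1 - P).PosSemidef ∧
        r = ((P * Φ (R - S)).trace).re} := by
  rw [dobrushinCurve, ← smul_eq_mul, ← Real.sSup_smul_of_nonneg hδ.1]
  apply csSup_eq_csSup_of_forall_exists_le
  · rintro _ ⟨ρ₀, ρ₁, h₀, h₁, hE₀, hE₁, hdist, rfl⟩
    obtain ⟨P, R, S, hP₀, hP₁, hR, hS, rfl, hval⟩ := hΦ.exists_traceNorm_map_sub_eq h₀ h₁ hdist
    exact ⟨_, ⟨_, ⟨P, ρ₁, R, S, h₁.1, h₁.2, trace_mul_comm ρ₁ H ▸ hE₁, h₀.1,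
      trace_mul_comm _ H ▸ hE₀, hR.1, hR.2, hS.1, hS.2, hP₀.posSemidef, hP₁, rfl⟩, rfl⟩, hval.le⟩
  · rintro _ ⟨_, ⟨P, Q, R, S, hQ, hQtr, hQE, hρ, hρE, hR, hRtr, hS, hStr, hP₀, hP₁, rfl⟩, rfl⟩
    have hR' : IsDensity R := ⟨hR, hRtr⟩
    have hS' : IsDensity S := ⟨hS, hStr⟩
    have hρtr : (Q + ((δ / 2 : ℝ) : ℂ) • (R - S)).trace = 1 := by
      rw [trace_add, trace_smul, hR'.trace_sub_eq_zero hS', smul_zero, add_zero, hQtr]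
    refine ⟨_, ⟨_, Q, ⟨hρ, hρtr⟩, ⟨hQ, hQtr⟩, trace_mul_comm H _ ▸ hρE, trace_mul_comm H Q ▸ hQE,
      ?_, rfl⟩, hΦ.mul_re_trace_mul_le_traceNorm_map_sub hR' hS' hP₀.nonneg hP₁ hδ.1 Q⟩
    rw [add_sub_cancel_left]
    exact hR'.traceNorm_smul_sub_le hS' hδ.1

/-- The Dobrushin curve of a quantum channel as a jointly constrained semidefinite bilinear
program: `F_E(δ) = δ · sup {tr(P Φ(R − S)) : (P,Q,R,S) ∈ Γ(E,δ)}`. -/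
theorem stmt_8 (d : ℕ) (hd : 0 < d)
    (Φ : Matrix (Fin d) (Fin d) ℂ →ₗ[ℂ] Matrix (Fin d) (Fin d) ℂ) (hΦ : IsCPTP Φ)
    (H : Matrix (Fin d) (Fin d) ℂ) (hH : H.IsHermitian)
    (E : ℝ) (hE : (⨅ i, hH.eigenvalues i) ≤ E)
    (δ : ℝ) (hδ : δ ∈ Set.Icc (0 : ℝ) 2) :
    dobrushinCurve (⇑Φ) H E δ =
      δ * sSup {r | ∃ P Q R S : Matrix (Fin d) (Fin d) ℂ,
        Q.PosSemidef ∧ Q.trace = 1 ∧ ((H * Q).trace).re ≤ E ∧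
        (Q + (((δ / 2 : ℝ) : ℂ)) • (R - S)).PosSemidef ∧
        ((H * (Q + (((δ / 2 : ℝ) : ℂ)) • (R - S))).trace).re ≤ E ∧
        R.PosSemidef ∧ R.trace = 1 ∧
        S.PosSemidef ∧ S.trace = 1 ∧
        P.PosSemidef ∧ (1 - P).PosSemidef ∧
        r = ((P * Φ (R - S)).trace).re} :=
  stmt_8_general d Φ hΦ H E δ hδ
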